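/- Given s > 0 and an exponent function p(·) with p_- > 0, the s-convexification (L^{p(·)})^{(s)} coincides with L^{sp(·)} as a set, and for all f ∈ L^{sp(·)}: 2^{-(1/s)max{1/p_-,1}} ‖f‖_{(L^{p(·)})^{(s)}} ≤ ‖f‖_{sp(·)} ≤ 2^{max{1/(sp_-),1}} ‖f‖_{(L^{p(·)})^{(s)}}. -/

import Mathlib

/-!
Write `q = s·p`. For any `g`, the `q`-modular of `g` and the `p`-modular of `|g|^s` share the
integral over `{p < ∞}` and differ only in that the second one raises the `L^∞` part on
`{p = ∞}` to the power `s`. Hence each modular is finite iff the other is, and if one is at most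
`1` then the other is at most `2`. Dividing by `2^{max{1/r_-, 1}}` at least halves an
`r`-modular, which turns the bound `2` back into `1`; translated to the Luxemburg–Nakano
functionals this gives the two norm inequalities.
-/

open MeasureTheory ENNReal Filter

/-- The modular of a variable Lebesgue space over a measure space. -/
noncomputable def modular {Ω : Type*} [MeasurableSpace Ω] (μ : Measure Ω)
    (p : Ω → ℝ≥0∞) (f : Ω → ℝ) : ℝ≥0∞ :=
  (∫⁻ x in {x | p x ≠ ∞}, ENNReal.ofReal (|f x| ^ (p x).toReal) ∂μ)
    + essSup (fun x => ENNReal.ofReal |f x|) (μ.restrict {x | p x = ∞})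

/-- The Luxemburg--Nakano functional associated with the modular. -/
noncomputable def luxNorm {Ω : Type*} [MeasurableSpace Ω] (μ : Measure Ω)
    (p : Ω → ℝ≥0∞) (f : Ω → ℝ) : ℝ≥0∞ :=
  sInf {lam : ℝ≥0∞ | 0 < lam ∧ lam ≠ ∞ ∧
    modular μ p (fun x => f x / lam.toReal) ≤ 1}

/-- Membership in the variable Lebesgue space `L^{p(·)}(Ω,μ)`. -/
def memLp {Ω : Type*} [MeasurableSpace Ω] (μ : Measure Ω)
    (p : Ω → ℝ≥0∞) (f : Ω → ℝ) : Prop :=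
  ∃ lam : ℝ, 0 < lam ∧ modular μ p (fun x => f x / lam) ≠ ∞

theorem ENNReal.essInf_const_mul {Ω : Type*} [MeasurableSpace Ω] {μ : Measure Ω} {c : ℝ≥0∞}
    (h0 : c ≠ 0) (ht : c ≠ ∞) (g : Ω → ℝ≥0∞) :
    essInf (fun x => c * g x) μ = c * essInf g μ :=
  (OrderIso.essInf_apply g μ (mulLeftOrderIso c (isUnit_iff.2 ⟨h0, ht⟩))).symm

theorem ENNReal.essSup_rpow {Ω : Type*} [MeasurableSpace Ω] {μ : Measure Ω} {s : ℝ}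
    (hs : 0 < s) (g : Ω → ℝ≥0∞) :
    essSup (fun x => g x ^ s) μ = essSup g μ ^ s :=
  (OrderIso.essSup_apply g μ (orderIsoRpow s hs)).symm

theorem ENNReal.ofReal_div_le_half {y d : ℝ} (hy : 0 ≤ y) (hd : 2 ≤ d) :
    ENNReal.ofReal (y / d) ≤ ENNReal.ofReal y / 2 :=
  calc ENNReal.ofReal (y / d) ≤ ENNReal.ofReal (y / 2) :=
        ofReal_le_ofReal (div_le_div_of_nonneg_left hy two_pos hd)
    _ = ENNReal.ofReal y / 2 := by rw [ofReal_div_of_pos two_pos, ofReal_ofNat]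

theorem ENNReal.ofReal_rpow_neg_one_div_mul_rpow_le {a b : ℝ≥0∞} {c s : ℝ} (hc : 0 < c)
    (hs : 0 < s) (h : a ≤ ENNReal.ofReal c * b ^ s) :
    ENNReal.ofReal (c ^ (-(1 / s))) * a ^ (1 / s) ≤ b := by
  have hcancel : ENNReal.ofReal (c ^ (-(1 / s))) * ENNReal.ofReal c ^ (1 / s) = 1 := by
    rw [ofReal_rpow_of_pos hc, ← ofReal_mul (by positivity), ← Real.rpow_add hc]
    simp
  calc ENNReal.ofReal (c ^ (-(1 / s))) * a ^ (1 / s)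
      ≤ ENNReal.ofReal (c ^ (-(1 / s))) * (ENNReal.ofReal c * b ^ s) ^ (1 / s) := by gcongr
    _ = (ENNReal.ofReal (c ^ (-(1 / s))) * ENNReal.ofReal c ^ (1 / s)) * b := by
        rw [mul_rpow_of_nonneg _ _ (by positivity), ← rpow_mul, mul_one_div_cancel hs.ne',
          rpow_one, mul_assoc]
    _ = b := by rw [hcancel, one_mul]

theorem abs_div_rpow_of_pos {a lam : ℝ} (hlam : 0 < lam) (s : ℝ) :
    |a / lam| ^ s = |a| ^ s / lam ^ s := by
  rw [abs_div, abs_of_pos hlam, Real.div_rpow (abs_nonneg a) hlam.le]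

theorem two_le_two_rpow {e : ℝ} (he : 1 ≤ e) : (2 : ℝ) ≤ 2 ^ e :=
  calc (2 : ℝ) = 2 ^ (1 : ℝ) := (Real.rpow_one 2).symm
    _ ≤ 2 ^ e := Real.rpow_le_rpow_of_exponent_le one_le_two he

theorem one_le_max_one_div_mul {m t : ℝ} (hm : 0 < m) (hmt : m ≤ t) :
    1 ≤ max (1 / m) 1 * t :=
  calc (1 : ℝ) = 1 / m * m := (one_div_mul_cancel hm.ne').symm
    _ ≤ max (1 / m) 1 * t :=
        mul_le_mul (le_max_left _ _) hmt hm.le (zero_le_one.trans (le_max_right _ _))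

section VariableLebesgue

variable {Ω : Type*} [MeasurableSpace Ω] {μ : Measure Ω}

theorem modular_div_le_half {r : Ω → ℝ≥0∞} (hr : Measurable r) {c : ℝ} (hc : 2 ≤ c)
    (hcr : ∀ᵐ x ∂μ, r x ≠ ∞ → 2 ≤ c ^ (r x).toReal) (g : Ω → ℝ) :
    modular μ r (fun x => g x / c) ≤ modular μ r g / 2 := by
  have hc0 : 0 < c := two_pos.trans_le hc
  have hfin : (∫⁻ x in {x | r x ≠ ∞}, ENNReal.ofReal (|g x / c| ^ (r x).toReal) ∂μ)
      ≤ (∫⁻ x in {x | r x ≠ ∞}, ENNReal.ofReal (|g x| ^ (r x).toReal) ∂μ) / 2 := by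
    rw [div_eq_mul_inv, ← lintegral_mul_const' _ _ (by simp)]
    refine lintegral_mono_ae ?_
    filter_upwards [ae_restrict_mem (hr (measurableSet_singleton ∞)).compl,
      ae_restrict_of_ae hcr] with x hx hx2
    rw [← div_eq_mul_inv, abs_div_rpow_of_pos hc0]
    exact ofReal_div_le_half (by positivity) (hx2 hx)
  have hinf : essSup (fun x => ENNReal.ofReal |g x / c|) (μ.restrict {x | r x = ∞})
      ≤ essSup (fun x => ENNReal.ofReal |g x|) (μ.restrict {x | r x = ∞}) / 2 := by
    rw [div_eq_mul_inv, mul_comm, ← ENNReal.essSup_const_mul]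
    refine essSup_mono_ae (Eventually.of_forall fun x => ?_)
    dsimp only
    rw [mul_comm, ← div_eq_mul_inv, abs_div, abs_of_pos hc0]
    exact ofReal_div_le_half (abs_nonneg _) hc
  calc modular μ r (fun x => g x / c)
      ≤ (∫⁻ x in {x | r x ≠ ∞}, ENNReal.ofReal (|g x| ^ (r x).toReal) ∂μ) / 2
        + essSup (fun x => ENNReal.ofReal |g x|) (μ.restrict {x | r x = ∞}) / 2 :=
        add_le_add hfin hinf
    _ = modular μ r g / 2 := ENNReal.div_add_div_same

theorem modular_div_two_rpow_le_one {r : Ω → ℝ≥0∞} (hr : Measurable r)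
    (hr0 : 0 < essInf r μ) {g : Ω → ℝ} (hg : modular μ r g ≤ 2) :
    modular μ r (fun x => g x / 2 ^ max (1 / (essInf r μ).toReal) 1) ≤ 1 := by
  set E := max (1 / (essInf r μ).toReal) 1
  have hc : (2 : ℝ) ≤ 2 ^ E := two_le_two_rpow (le_max_right _ 1)
  have hcr : ∀ᵐ x ∂μ, r x ≠ ∞ → 2 ≤ ((2 : ℝ) ^ E) ^ (r x).toReal := by
    filter_upwards [ae_essInf_le (f := r)] with x hx hxt
    have hm : 0 < (essInf r μ).toReal := toReal_pos hr0.ne' (ne_top_of_le_ne_top hxt hx)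
    rw [← Real.rpow_mul zero_le_two]
    exact two_le_two_rpow (one_le_max_one_div_mul hm (toReal_mono hxt hx))
  calc modular μ r (fun x => g x / 2 ^ E) ≤ modular μ r g / 2 := modular_div_le_half hr hc hcr g
    _ ≤ 2 / 2 := by gcongr
    _ = 1 := ENNReal.div_self two_ne_zero ofNat_ne_top

theorem modular_ofReal_mul {p : Ω → ℝ≥0∞} {s : ℝ} (hs : 0 < s) (g : Ω → ℝ) :
    modular μ (fun x => ENNReal.ofReal s * p x) g
      = (∫⁻ x in {x | p x ≠ ∞}, ENNReal.ofReal (|g x| ^ (ENNReal.ofReal s * p x).toReal) ∂μ)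
        + essSup (fun x => ENNReal.ofReal |g x|) (μ.restrict {x | p x = ∞}) := by
  have hset : ∀ x, ENNReal.ofReal s * p x = ∞ ↔ p x = ∞ := fun x => by
    simp [mul_eq_top, hs]
  simp only [modular, ne_eq, hset]

theorem modular_abs_rpow {p : Ω → ℝ≥0∞} {s : ℝ} (hs : 0 < s) (g : Ω → ℝ) :
    modular μ p (fun x => |g x| ^ s)
      = (∫⁻ x in {x | p x ≠ ∞}, ENNReal.ofReal (|g x| ^ (ENNReal.ofReal s * p x).toReal) ∂μ)
        + essSup (fun x => ENNReal.ofReal |g x|) (μ.restrict {x | p x = ∞}) ^ s := by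
  have hint : ∀ x, |(|g x| ^ s)| ^ (p x).toReal = |g x| ^ (ENNReal.ofReal s * p x).toReal :=
    fun x => by
      rw [abs_of_nonneg (by positivity), ← Real.rpow_mul (abs_nonneg _), toReal_mul,
        toReal_ofReal hs.le]
  have hsup : ∀ x, ENNReal.ofReal |(|g x| ^ s)| = ENNReal.ofReal |g x| ^ s := fun x => by
    rw [abs_of_nonneg (by positivity), ofReal_rpow_of_nonneg (abs_nonneg _) hs.le]
  simp only [modular, hint, hsup, ENNReal.essSup_rpow hs]

theorem modular_abs_rpow_le_two {p : Ω → ℝ≥0∞} {s : ℝ} (hs : 0 < s) {g : Ω → ℝ}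
    (h : modular μ (fun x => ENNReal.ofReal s * p x) g ≤ 1) :
    modular μ p (fun x => |g x| ^ s) ≤ 2 := by
  rw [modular_ofReal_mul hs] at h
  rw [modular_abs_rpow hs, ← one_add_one_eq_two]
  exact add_le_add (le_self_add.trans h) (rpow_le_one (le_add_self.trans h) hs.le)

theorem modular_ofReal_mul_le_two {p : Ω → ℝ≥0∞} {s : ℝ} (hs : 0 < s) {g : Ω → ℝ}
    (h : modular μ p (fun x => |g x| ^ s) ≤ 1) :
    modular μ (fun x => ENNReal.ofReal s * p x) g ≤ 2 := by
  rw [modular_abs_rpow hs] at h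
  rw [modular_ofReal_mul hs, ← one_add_one_eq_two]
  refine add_le_add (le_self_add.trans h) ?_
  rw [← rpow_le_rpow_iff hs, one_rpow]
  exact le_add_self.trans h

theorem modular_ofReal_mul_ne_top_iff {p : Ω → ℝ≥0∞} {s : ℝ} (hs : 0 < s) (g : Ω → ℝ) :
    modular μ (fun x => ENNReal.ofReal s * p x) g ≠ ∞
      ↔ modular μ p (fun x => |g x| ^ s) ≠ ∞ := by
  rw [modular_ofReal_mul hs, modular_abs_rpow hs, ne_eq, ne_eq, add_eq_top, add_eq_top,
    rpow_eq_top_iff_of_pos hs]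

theorem memLp_ofReal_mul_iff {p : Ω → ℝ≥0∞} {s : ℝ} (hs : 0 < s) (f : Ω → ℝ) :
    memLp μ (fun x => ENNReal.ofReal s * p x) f ↔ memLp μ p (fun x => |f x| ^ s) := by
  have key : ∀ lam : ℝ, 0 < lam → (modular μ (fun x => ENNReal.ofReal s * p x)
      (fun x => f x / lam) ≠ ∞ ↔ modular μ p (fun x => |f x| ^ s / lam ^ s) ≠ ∞) :=
    fun lam hlam => by
      simp only [modular_ofReal_mul_ne_top_iff hs, abs_div_rpow_of_pos hlam]
  constructor
  · rintro ⟨lam, hlam, h⟩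
    exact ⟨lam ^ s, Real.rpow_pos_of_pos hlam s, (key lam hlam).1 h⟩
  · rintro ⟨lam, hlam, h⟩
    have hroot : (lam ^ (1 / s)) ^ s = lam := by
      rw [← Real.rpow_mul hlam.le, one_div_mul_cancel hs.ne', Real.rpow_one]
    refine ⟨lam ^ (1 / s), Real.rpow_pos_of_pos hlam _, (key _ (by positivity)).2 ?_⟩
    rwa [hroot]

theorem modular_abs_rpow_div_le_one {p : Ω → ℝ≥0∞} (hpm : Measurable p)
    (hp0 : 0 < essInf p μ) {s : ℝ} (hs : 0 < s) {f : Ω → ℝ} {lam : ℝ} (hlam : 0 < lam)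
    (h : modular μ (fun x => ENNReal.ofReal s * p x) (fun x => f x / lam) ≤ 1) :
    modular μ p (fun x => |f x| ^ s
      / (2 ^ max (1 / (essInf p μ).toReal) 1 * lam ^ s)) ≤ 1 := by
  have := modular_div_two_rpow_le_one hpm hp0 (modular_abs_rpow_le_two hs h)
  simpa only [abs_div_rpow_of_pos hlam, div_div, mul_comm (lam ^ s)] using this

theorem modular_ofReal_mul_div_le_one {p : Ω → ℝ≥0∞} (hpm : Measurable p)
    (hp0 : 0 < essInf p μ) {s : ℝ} (hs : 0 < s) {f : Ω → ℝ} {lam : ℝ} (hlam : 0 < lam)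
    (h : modular μ p (fun x => |f x| ^ s / lam) ≤ 1) :
    modular μ (fun x => ENNReal.ofReal s * p x) (fun x => f x
      / (2 ^ max (1 / (s * (essInf p μ).toReal)) 1 * lam ^ (1 / s))) ≤ 1 := by
  have hroot : 0 < lam ^ (1 / s) := Real.rpow_pos_of_pos hlam _
  have hs0 : ENNReal.ofReal s ≠ 0 := (ofReal_pos.2 hs).ne'
  have hq : essInf (fun x => ENNReal.ofReal s * p x) μ = ENNReal.ofReal s * essInf p μ :=
    ENNReal.essInf_const_mul hs0 ofReal_ne_top p
  have h' : modular μ p (fun x => |f x / lam ^ (1 / s)| ^ s) ≤ 1 := by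
    simpa only [abs_div_rpow_of_pos hroot, ← Real.rpow_mul hlam.le, one_div_mul_cancel hs.ne',
      Real.rpow_one] using h
  have := modular_div_two_rpow_le_one (hpm.const_mul _) (by rw [hq]; exact mul_pos hs0 hp0.ne')
    (modular_ofReal_mul_le_two hs h')
  rwa [hq, toReal_mul, toReal_ofReal hs.le, funext fun x => div_div (f x) _ _,
    mul_comm (lam ^ (1 / s))] at this

theorem luxNorm_le_ofReal {r : Ω → ℝ≥0∞} {g : Ω → ℝ} {lam : ℝ} (hlam : 0 < lam)
    (h : modular μ r (fun x => g x / lam) ≤ 1) : luxNorm μ r g ≤ ENNReal.ofReal lam :=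
  sInf_le ⟨ofReal_pos.2 hlam, ofReal_ne_top, by rwa [toReal_ofReal hlam.le]⟩

theorem le_luxNorm {r : Ω → ℝ≥0∞} {g : Ω → ℝ} {a : ℝ≥0∞}
    (h : ∀ lam : ℝ, 0 < lam → modular μ r (fun x => g x / lam) ≤ 1 → a ≤ ENNReal.ofReal lam) :
    a ≤ luxNorm μ r g :=
  le_sInf fun lam ⟨h0, ht, hm⟩ => by
    simpa only [ofReal_toReal ht] using h lam.toReal (toReal_pos h0.ne' ht) hm

theorem luxNorm_le_ofReal_mul_rpow {r r' : Ω → ℝ≥0∞} {g g' : Ω → ℝ} {c t : ℝ} (hc : 0 < c)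
    (ht : 0 < t) (h : ∀ lam : ℝ, 0 < lam → modular μ r (fun x => g x / lam) ≤ 1 →
      modular μ r' (fun x => g' x / (c * lam ^ t)) ≤ 1) :
    luxNorm μ r' g' ≤ ENNReal.ofReal c * luxNorm μ r g ^ t := by
  have hc0 : ENNReal.ofReal c ≠ 0 := (ofReal_pos.2 hc).ne'
  rw [mul_comm, ← ENNReal.div_le_iff hc0 ofReal_ne_top, ← rpow_inv_le_iff ht]
  refine le_luxNorm fun lam hlam hm => ?_
  rw [rpow_inv_le_iff ht, ENNReal.div_le_iff hc0 ofReal_ne_top]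
  calc luxNorm μ r' g' ≤ ENNReal.ofReal (c * lam ^ t) :=
        luxNorm_le_ofReal (by positivity) (h lam hlam hm)
    _ = ENNReal.ofReal lam ^ t * ENNReal.ofReal c := by
        rw [ofReal_mul hc.le, ofReal_rpow_of_pos hlam, mul_comm]

end VariableLebesgue

/-- The s-convexification of `L^{p(·)}` coincides with `L^{sp(·)}`, with the
two-sided quasi-norm equivalence
`2^{-(1/s)max{1/p_-,1}} ‖f‖_{(L^{p(·)})^{(s)}} ≤ ‖f‖_{sp(·)}
  ≤ 2^{max{1/(sp_-),1}} ‖f‖_{(L^{p(·)})^{(s)}}`. -/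
theorem convexification_eq_variable_Lebesgue {Ω : Type*} [MeasurableSpace Ω]
    (μ : Measure Ω) (p : Ω → ℝ≥0∞) (hpm : Measurable p)
    (hp0 : 0 < essInf p μ) (s : ℝ) (hs : 0 < s) :
    (∀ f : Ω → ℝ, Measurable f →
      (memLp μ (fun x => ENNReal.ofReal s * p x) f ↔ memLp μ p (fun x => |f x| ^ s))) ∧
    (∀ f : Ω → ℝ, Measurable f → memLp μ (fun x => ENNReal.ofReal s * p x) f →
      ENNReal.ofReal ((2 : ℝ) ^ (-(1 / s) * max (1 / (essInf p μ).toReal) 1))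
          * (luxNorm μ p (fun x => |f x| ^ s)) ^ (1 / s)
        ≤ luxNorm μ (fun x => ENNReal.ofReal s * p x) f ∧
      luxNorm μ (fun x => ENNReal.ofReal s * p x) f
        ≤ ENNReal.ofReal ((2 : ℝ) ^ max (1 / (s * (essInf p μ).toReal)) 1)
            * (luxNorm μ p (fun x => |f x| ^ s)) ^ (1 / s)) := by
  refine ⟨fun f _ => memLp_ofReal_mul_iff hs f, fun f _ _ => ⟨?_, ?_⟩⟩
  · have hconv := luxNorm_le_ofReal_mul_rpow (Real.rpow_pos_of_pos two_pos _) hs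
      fun lam hlam hm => modular_abs_rpow_div_le_one (f := f) hpm hp0 hs hlam hm
    rw [mul_comm (-(1 / s)), Real.rpow_mul zero_le_two]
    exact ofReal_rpow_neg_one_div_mul_rpow_le (Real.rpow_pos_of_pos two_pos _) hs hconv
  · exact luxNorm_le_ofReal_mul_rpow (Real.rpow_pos_of_pos two_pos _) (one_div_pos.2 hs)
      fun lam hlam hm => modular_ofReal_mul_div_le_one hpm hp0 hs hlam hm
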